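/- If a path decomposition of a graph G has a bag X containing a clique S of G, then splicing a path decomposition P* of a disjoint graph H into copies of X (duplicating X and adding the bags of P* to consecutive copies) yields a valid path decomposition of the graph obtained from the disjoint union of G and H by joining all vertices of H to all vertices of S, of width at most the maximum of (width of original decomposition) and (|X| + maximum bag size of P* − 1). -/

import Mathlib

open SimpleGraph

/-- A path decomposition of a graph `G`: a finite sequence of bags covering all
vertices and edges, in which each vertex occurs in a consecutive set of bags. -/
structure PathDecomp {V : Type*} (G : SimpleGraph V) where
  n : ℕ
  bag : Fin n → Finset V
  mem_bag : ∀ v : V, ∃ i, v ∈ bag i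
  adj_bag : ∀ u v : V, G.Adj u v → ∃ i, u ∈ bag i ∧ v ∈ bag i
  convex : ∀ v : V, ∀ i j l : Fin n, i ≤ j → j ≤ l → v ∈ bag i → v ∈ bag l → v ∈ bag j

/-- The width of a path decomposition: maximum bag size minus one. -/
def PathDecomp.width {V : Type*} {G : SimpleGraph V} (P : PathDecomp G) : ℕ :=
  (Finset.univ.sup fun i => (P.bag i).card) - 1

/-- Pathwidth: the minimum width over all path decompositions. -/
noncomputable def pathwidth {V : Type*} (G : SimpleGraph V) : ℕ :=
  sInf {w | ∃ P : PathDecomp G, P.width = w}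


/-- The graph obtained from the disjoint union of `G` and `H` by joining all
vertices of `H` to all vertices of `S ⊆ V(G)`. -/
def joinToClique {V W : Type*} (G : SimpleGraph V) (H : SimpleGraph W) (S : Finset V) :
    SimpleGraph (V ⊕ W) :=
  SimpleGraph.fromRel fun x y =>
    (∃ a b, x = Sum.inl a ∧ y = Sum.inl b ∧ G.Adj a b) ∨
    (∃ a b, x = Sum.inr a ∧ y = Sum.inr b ∧ H.Adj a b) ∨
    (∃ a b, x = Sum.inr a ∧ y = Sum.inl b ∧ b ∈ S)


/-!
Bag `i` of the spliced sequence carries the `G`-part of bag `spliceIdx j n' i` of `P`, where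
`spliceIdx j n'` repeats `j` on the `n'` copies of `X`. Being monotone, it pulls intervals back to
intervals, so every vertex of `G` still occupies consecutive bags; a vertex of `H` occupies its
interval in `P'` shifted by `j`. Every bag of `P` survives, and every bag of `P'` sits next to a
copy of `X ⊇ S`, which covers the edges of `G`, of `H`, and between `V(H)` and `S`. A spliced bag
is a bag of `P`, or `X` together with a bag of `P'`, whence the width bound.
-/

theorem SimpleGraph.exists_mem_of_fromRel_adj {α ι : Type*} {r : α → α → Prop} {B : ι → Finset α}
    (h : ∀ x y, r x y → ∃ i, x ∈ B i ∧ y ∈ B i) {x y : α} (hxy : (fromRel r).Adj x y) :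
    ∃ i, x ∈ B i ∧ y ∈ B i := by
  obtain ⟨-, hxy | hyx⟩ := hxy
  · exact h x y hxy
  · obtain ⟨i, hy, hx⟩ := h y x hyx
    exact ⟨i, hx, hy⟩

def spliceIdx (j n' i : ℕ) : ℕ :=
  if i < j then i else if i < j + n' then j else i - (n' - 1)

theorem monotone_spliceIdx (j n' : ℕ) : Monotone (spliceIdx j n') := fun a b hab => by
  simp only [spliceIdx]
  split_ifs <;> omega

theorem spliceIdx_of_le_of_sub_lt {j n' i : ℕ} (hji : j ≤ i) (hi : i - j < n') :
    spliceIdx j n' i = j := by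
  simp only [spliceIdx]
  split_ifs <;> omega

theorem exists_spliceIdx_eq {n k : ℕ} (j n' : ℕ) (hk : k < n) :
    ∃ i < n + (n' - 1), spliceIdx j n' i = k := by
  by_cases hkj : k ≤ j
  · exact ⟨k, by omega, by simp only [spliceIdx]; split_ifs <;> omega⟩
  · exact ⟨k + (n' - 1), by omega, by simp only [spliceIdx]; split_ifs <;> omega⟩

namespace PathDecomp

variable {V W : Type*} {G : SimpleGraph V} {H : SimpleGraph W}

-- Indices live in `ℕ`, so that reindexing along a splice is a preimage under a monotone `ℕ → ℕ`.
def occ (P : PathDecomp G) (v : V) : Set ℕ :=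
  {k | ∃ h : k < P.n, v ∈ P.bag ⟨k, h⟩}

theorem mem_occ_iff (P : PathDecomp G) (v : V) {k : ℕ} (hk : k < P.n) :
    k ∈ P.occ v ↔ v ∈ P.bag ⟨k, hk⟩ :=
  ⟨fun ⟨_, h⟩ => h, fun h => ⟨hk, h⟩⟩

theorem ordConnected_occ (P : PathDecomp G) (v : V) : (P.occ v).OrdConnected := by
  refine ⟨fun a ⟨ha, hva⟩ b ⟨hb, hvb⟩ c hc => ?_⟩
  have hcb : c < P.n := lt_of_le_of_lt hc.2 hb
  exact ⟨hcb, P.convex v ⟨a, ha⟩ ⟨c, hcb⟩ ⟨b, hb⟩ hc.1 hc.2 hva hvb⟩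

section Splice

variable [DecidableEq V] [DecidableEq W] (P : PathDecomp G) (j : Fin P.n) (P' : PathDecomp H)

def spliceBag : Fin (P.n + (P'.n - 1)) → Finset (V ⊕ W) := fun i =>
  if h1 : i.1 < j.1 then
    (P.bag ⟨i.1, by omega⟩).image Sum.inl
  else if h2 : i.1 < j.1 + P'.n then
    (P.bag j).image Sum.inl ∪ (P'.bag ⟨i.1 - j.1, by omega⟩).image Sum.inr
  else
    (P.bag ⟨i.1 - (P'.n - 1), by omega⟩).image Sum.inl

theorem inl_mem_spliceBag_iff (v : V) (i : Fin (P.n + (P'.n - 1))) :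
    Sum.inl v ∈ P.spliceBag j P' i ↔ (i : ℕ) ∈ spliceIdx j P'.n ⁻¹' P.occ v := by
  simp only [spliceBag, spliceIdx, Set.mem_preimage]
  split_ifs <;> simpa using (P.mem_occ_iff v _).symm

theorem inr_mem_spliceBag_iff (w : W) (i : Fin (P.n + (P'.n - 1))) :
    Sum.inr w ∈ P.spliceBag j P' i ↔ (i : ℕ) ∈ Set.Ici (j : ℕ) ∩ (· - j) ⁻¹' P'.occ w := by
  simp only [spliceBag, Set.mem_inter_iff, Set.mem_Ici, Set.mem_preimage]
  split_ifs with h₁ h₂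
  · simp only [Finset.mem_image, reduceCtorEq, and_false, exists_false, false_iff]
    omega
  · simpa [Nat.le_of_not_lt h₁] using (P'.mem_occ_iff w _).symm
  · simp only [Finset.mem_image, reduceCtorEq, and_false, exists_false, false_iff]
    exact fun ⟨_, hk, _⟩ => by omega

theorem exists_inl_subset_spliceBag (k : Fin P.n) :
    ∃ i, ∀ v ∈ P.bag k, Sum.inl v ∈ P.spliceBag j P' i := by
  obtain ⟨i, hi, hik⟩ := exists_spliceIdx_eq j P'.n k.2
  refine ⟨⟨i, hi⟩, fun v hv => ?_⟩
  rw [inl_mem_spliceBag_iff, Set.mem_preimage, hik]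
  exact (P.mem_occ_iff v k.2).2 hv

theorem exists_inr_subset_spliceBag (k : Fin P'.n) :
    ∃ i, (∀ w ∈ P'.bag k, Sum.inr w ∈ P.spliceBag j P' i) ∧
      ∀ v ∈ P.bag j, Sum.inl v ∈ P.spliceBag j P' i := by
  refine ⟨⟨j + k, by omega⟩, fun w hw => ?_, fun v hv => ?_⟩
  · rw [inr_mem_spliceBag_iff]
    exact ⟨Nat.le_add_right _ _, by simpa using (P'.mem_occ_iff w k.2).2 hw⟩
  · rw [inl_mem_spliceBag_iff, Set.mem_preimage,
      spliceIdx_of_le_of_sub_lt (Nat.le_add_right _ _) (by simp)]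
    exact (P.mem_occ_iff v j.2).2 hv

theorem ordConnected_spliceBag (x : V ⊕ W) :
    {i | x ∈ P.spliceBag j P' i}.OrdConnected := by
  have hval := Fin.val_strictMono (n := P.n + (P'.n - 1)) |>.monotone
  rcases x with v | w
  · simp_rw [inl_mem_spliceBag_iff]
    exact ((P.ordConnected_occ v).preimage_mono (monotone_spliceIdx _ _)).preimage_mono hval
  · simp_rw [inr_mem_spliceBag_iff]
    exact (Set.ordConnected_Ici.inter ((P'.ordConnected_occ w).preimage_mono
      fun _ _ h => Nat.sub_le_sub_right h _)).preimage_mono hval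

def splice {S : Finset V} (hS : S ⊆ P.bag j) : PathDecomp (joinToClique G H S) where
  n := P.n + (P'.n - 1)
  bag := P.spliceBag j P'
  mem_bag := by
    rintro (v | w)
    · obtain ⟨k, hk⟩ := P.mem_bag v
      obtain ⟨i, hi⟩ := P.exists_inl_subset_spliceBag j P' k
      exact ⟨i, hi v hk⟩
    · obtain ⟨k, hk⟩ := P'.mem_bag w
      obtain ⟨i, hi, -⟩ := P.exists_inr_subset_spliceBag j P' k
      exact ⟨i, hi w hk⟩
  adj_bag x y hxy := by
    refine SimpleGraph.exists_mem_of_fromRel_adj ?_ hxy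
    rintro x y (⟨a, b, rfl, rfl, hab⟩ | ⟨a, b, rfl, rfl, hab⟩ | ⟨a, b, rfl, rfl, hb⟩)
    · obtain ⟨k, ha, hb⟩ := P.adj_bag a b hab
      obtain ⟨i, hi⟩ := P.exists_inl_subset_spliceBag j P' k
      exact ⟨i, hi a ha, hi b hb⟩
    · obtain ⟨k, ha, hb⟩ := P'.adj_bag a b hab
      obtain ⟨i, hi, -⟩ := P.exists_inr_subset_spliceBag j P' k
      exact ⟨i, hi a ha, hi b hb⟩
    · obtain ⟨k, ha⟩ := P'.mem_bag a
      obtain ⟨i, hiH, hiX⟩ := P.exists_inr_subset_spliceBag j P' k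
      exact ⟨i, hiH a ha, hiX b (hS hb)⟩
  convex x _ _ _ h₁ h₂ hx hx' := (P.ordConnected_spliceBag j P' x).out hx hx' ⟨h₁, h₂⟩

theorem card_spliceBag_le (i : Fin (P.n + (P'.n - 1))) :
    (P.spliceBag j P' i).card ≤ max (Finset.univ.sup fun k => (P.bag k).card)
      ((P.bag j).card + Finset.univ.sup fun k => (P'.bag k).card) := by
  have hP (k : Fin P.n) := Finset.le_sup (f := fun k => (P.bag k).card) (Finset.mem_univ k)
  have hP' (k : Fin P'.n) := Finset.le_sup (f := fun k => (P'.bag k).card) (Finset.mem_univ k)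
  simp only [spliceBag]
  split_ifs
  · exact le_max_of_le_left (Finset.card_image_le.trans (hP _))
  · exact le_max_of_le_right ((Finset.card_union_le _ _).trans
      (add_le_add Finset.card_image_le (Finset.card_image_le.trans (hP' _))))
  · exact le_max_of_le_left (Finset.card_image_le.trans (hP _))

end Splice

end PathDecomp

/-- Splicing a path decomposition `P'` of a disjoint graph `H` into the bag
`X = P.bag j` of a path decomposition `P` of `G`, where `X` contains a clique
`S`: duplicating `X` and adding the bags of `P'` to consecutive copies yields a
valid path decomposition of the graph obtained from `G ⊔ H` by joining `V(H)`
to `S`, of width at most `max (width P) (|X| + maxbag P' − 1)`. -/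
theorem splice_path_decomposition {V W : Type*} [DecidableEq V] [DecidableEq W]
    (G : SimpleGraph V) (H : SimpleGraph W) (S : Finset V)
    (P : PathDecomp G) (j : Fin P.n) (hS : S ⊆ P.bag j)
    (P' : PathDecomp H) :
    ∀ bag : Fin (P.n + (P'.n - 1)) → Finset (V ⊕ W),
      (bag = fun i =>
        if h1 : i.1 < j.1 then
          (P.bag ⟨i.1, by have := i.isLt; have := j.isLt; omega⟩).image Sum.inl
        else if h2 : i.1 < j.1 + P'.n then
          (P.bag j).image Sum.inl ∪
            (P'.bag ⟨i.1 - j.1, by have := i.isLt; have := j.isLt; omega⟩).image Sum.inr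
        else
          (P.bag ⟨i.1 - (P'.n - 1), by have := i.isLt; have := j.isLt; omega⟩).image Sum.inl) →
      (∀ x : V ⊕ W, ∃ i, x ∈ bag i) ∧
      (∀ x y : V ⊕ W, (joinToClique G H S).Adj x y → ∃ i, x ∈ bag i ∧ y ∈ bag i) ∧
      (∀ (x : V ⊕ W) (i i' i'' : Fin (P.n + (P'.n - 1))), i ≤ i' → i' ≤ i'' →
          x ∈ bag i → x ∈ bag i'' → x ∈ bag i') ∧
      (∀ i, (bag i).card - 1 ≤
        max P.width
          ((P.bag j).card + (Finset.univ.sup fun i' => (P'.bag i').card) - 1)) := by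
  rintro _ rfl
  let Q := P.splice j P' hS
  refine ⟨Q.mem_bag, Q.adj_bag, Q.convex, fun i => ?_⟩
  have := P.card_spliceBag_le j P' i
  change (P.spliceBag j P' i).card - 1 ≤ _
  unfold PathDecomp.width
  omega
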